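/- Let X be a Banach space with the Dunford–Pettis property (i.e., every relatively weakly compact subset of X* is relatively Mackey compact, equivalently every weakly compact operator from X is completely continuous). Then for every nonempty bounded set A ⊆ X*, χ_m(A) ≤ 2·ω(A). -/

import Mathlib

/-! Fix a weakly compact `L ⊆ B_X` and a weakly compact `K ⊆ X*` with `d̂(A, K) ≤ s`. By the
Dunford–Pettis property `K` is Mackey compact, so `K|_L` has finite `ε`-nets; these are
`(s + ε)`-nets of `A|_L` that need not lie in `A|_L`, and replacing each net point by a nearby
point of `A|_L` at most doubles the radius, so `χ₀(A|_L) ≤ 2s`. Weakly compact sets are norm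
bounded (uniform boundedness), which keeps every real `⨆` and `⨅` involved away from its
junk value. -/

open Filter Metric Set NormedSpace
open scoped Topology

noncomputable section

/-- The non-symmetrized Hausdorff distance `d̂(A,B) = sup_{a ∈ A} dist(a, B)`,
formulated with an abstract distance function `d`. -/
def hdD {Z : Type*} (d : Z → Z → ℝ) (A B : Set Z) : ℝ :=
  ⨆ a : A, ⨅ b : B, d a b

/-- `χ₀(A) = inf { d̂(A,F) : F ⊆ A finite nonempty }`. -/
def chi0D {Z : Type*} (d : Z → Z → ℝ) (A : Set Z) : ℝ :=
  sInf {r | ∃ F : Set Z, F ⊆ A ∧ F.Finite ∧ F.Nonempty ∧ r = hdD d A F}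

/-- A subset of a normed space is weakly compact if it is compact in the weak topology. -/
def IsWeaklyCompact (𝕜 : Type*) [RCLike 𝕜] {Z : Type*} [NormedAddCommGroup Z]
    [NormedSpace 𝕜 Z] (K : Set Z) : Prop :=
  IsCompact (toWeakSpace 𝕜 Z '' K)

/-- The de Blasi measure of weak non-compactness
`ω(A) = inf { d̂(A,K) : K weakly compact nonempty }`. -/
def deBlasiOmega (𝕜 : Type*) [RCLike 𝕜] {Z : Type*} [NormedAddCommGroup Z]
    [NormedSpace 𝕜 Z] (A : Set Z) : ℝ :=
  sInf {r | ∃ K : Set Z, K.Nonempty ∧ IsWeaklyCompact 𝕜 K ∧ r = hdD dist A K}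

/-- The measure of Mackey non-compactness of a bounded set `A ⊆ X*`:
`χ_m(A) = sup { χ₀(A|_L) : L ⊆ B_X weakly compact }`, where `A|_L ⊆ ℓ∞(L)`
carries the supremum distance. `χ_m(A) = 0` iff `A` is relatively Mackey compact. -/
def chiMackey (𝕜 : Type*) [RCLike 𝕜] {X : Type*} [NormedAddCommGroup X] [NormedSpace 𝕜 X]
    (A : Set (StrongDual 𝕜 X)) : ℝ :=
  sSup {r | ∃ L : Set X, L ⊆ closedBall (0 : X) 1 ∧ IsWeaklyCompact 𝕜 L ∧
    r = chi0D (fun u v : ↥L → 𝕜 => ⨆ y : L, ‖u y - v y‖)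
      ((fun φ : StrongDual 𝕜 X => fun y : L => φ (y : X)) '' A)}

lemma iSup_subtype_image {Y Z α : Type*} [SupSet α] (f : Y → Z) (g : Z → α) (S : Set Y) :
    ⨆ z : f '' S, g z = ⨆ y : S, g (f y) :=
  congrArg sSup (by ext; simp)

lemma iInf_subtype_image {Y Z α : Type*} [InfSet α] (f : Y → Z) (g : Z → α) (S : Set Y) :
    ⨅ z : f '' S, g z = ⨅ y : S, g (f y) :=
  congrArg sInf (by ext; simp)

section HausdorffExcess

variable {Y Z : Type*} {d : Z → Z → ℝ} {A B F : Set Z} {r s t C M : ℝ}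

lemma hdD_nonneg (hd : ∀ a b, 0 ≤ d a b) (A B : Set Z) : 0 ≤ hdD d A B :=
  Real.iSup_nonneg fun _ => Real.iInf_nonneg fun _ => hd _ _

lemma hdD_le_of_forall_exists (hd : ∀ a b, 0 ≤ d a b) (hC : 0 ≤ C)
    (h : ∀ a ∈ A, ∃ b ∈ B, d a b ≤ C) : hdD d A B ≤ C := by
  refine Real.iSup_le (fun a => ?_) hC
  obtain ⟨b, hb, hab⟩ := h a a.2
  exact (ciInf_le ⟨0, by rintro _ ⟨b', rfl⟩; exact hd _ _⟩ (⟨b, hb⟩ : B)).trans hab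

lemma exists_lt_of_hdD_lt (hd : ∀ a b, 0 ≤ d a b) (hB : B.Nonempty)
    (hbdd : ∀ a ∈ A, ∀ b ∈ B, d a b ≤ M) (h : hdD d A B < r) {a : Z} (ha : a ∈ A) :
    ∃ b ∈ B, d a b < r := by
  have : Nonempty B := hB.to_subtype
  have hbdd_below : ∀ a, BddBelow (range fun b : B => d a b) :=
    fun a => ⟨0, by rintro _ ⟨b, rfl⟩; exact hd _ _⟩
  obtain ⟨b₀, hb₀⟩ := hB
  have hinf : (⨅ b : B, d a b) ≤ hdD d A B := by
    refine le_ciSup (f := fun a : A => ⨅ b : B, d a b) ⟨M, ?_⟩ ⟨a, ha⟩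
    rintro _ ⟨a', rfl⟩
    exact (ciInf_le (hbdd_below a') ⟨b₀, hb₀⟩).trans (hbdd _ a'.2 _ hb₀)
  obtain ⟨b, hb⟩ := exists_lt_of_ciInf_lt (hinf.trans_lt h)
  exact ⟨b, b.2, hb⟩

lemma hdD_image (f : Y → Z) (d : Z → Z → ℝ) (A B : Set Y) :
    hdD d (f '' A) (f '' B) = hdD (fun x y => d (f x) (f y)) A B := by
  simp only [hdD, iInf_subtype_image]
  exact iSup_subtype_image f (fun z => ⨅ b : B, d z (f b)) A

lemma chi0D_image (f : Y → Z) (d : Z → Z → ℝ) (A : Set Y) :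
    chi0D d (f '' A) = chi0D (fun x y => d (f x) (f y)) A := by
  unfold chi0D
  congr 1
  ext r
  rw [mem_ofPred_eq, mem_ofPred_eq, exists_subset_image_finite_and (p := fun F => F.Nonempty ∧ r = hdD d (f '' A) F)]
  simp only [image_nonempty, hdD_image]

lemma chi0D_le_hdD (hd : ∀ a b, 0 ≤ d a b) (hFA : F ⊆ A) (hF : F.Finite) (hFne : F.Nonempty) :
    chi0D d A ≤ hdD d A F := by
  refine csInf_le ⟨0, ?_⟩ ⟨F, hFA, hF, hFne, rfl⟩
  rintro _ ⟨F', _, _, _, rfl⟩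
  exact hdD_nonneg hd _ _

lemma chi0D_le_of_forall_le (hd : ∀ a b, 0 ≤ d a b) (hB : B.Nonempty)
    (hbdd : ∀ a ∈ B, ∀ b ∈ B, d a b ≤ M) : chi0D d B ≤ M := by
  obtain ⟨b, hb⟩ := hB
  calc chi0D d B ≤ hdD d B {b} :=
        chi0D_le_hdD hd (singleton_subset_iff.2 hb) (finite_singleton b) (singleton_nonempty b)
    _ ≤ M := hdD_le_of_forall_exists hd ((hd b b).trans (hbdd b hb b hb))
        fun a ha => ⟨b, rfl, hbdd a ha b hb⟩

lemma exists_finite_of_chi0D_lt (hd : ∀ a b, 0 ≤ d a b) (hB : B.Nonempty)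
    (hbdd : ∀ a ∈ B, ∀ b ∈ B, d a b ≤ M) (h : chi0D d B < r) :
    ∃ F ⊆ B, F.Finite ∧ ∀ b ∈ B, ∃ f ∈ F, d b f < r := by
  obtain ⟨b₀, hb₀⟩ := hB
  obtain ⟨_, ⟨F, hFB, hF, hFne, rfl⟩, hlt⟩ := exists_lt_of_csInf_lt
    (by exact ⟨_, {b₀}, singleton_subset_iff.2 hb₀, finite_singleton b₀, singleton_nonempty b₀, rfl⟩) h
  exact ⟨F, hFB, hF, fun b hb =>
    exists_lt_of_hdD_lt hd hFne (fun a ha f hf => hbdd a ha f (hFB hf)) hlt hb⟩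

lemma exists_finite_subset_of_finite (hsymm : ∀ a b, d a b = d b a)
    (htri : ∀ a b c, d a c ≤ d a b + d b c) (hA : A.Nonempty) (hF : F.Finite)
    (h : ∀ a ∈ A, ∃ f ∈ F, d a f < t) : ∃ G ⊆ A, G.Finite ∧ ∀ a ∈ A, ∃ g ∈ G, d a g < 2 * t := by
  obtain ⟨a₀, ha₀⟩ := hA
  have hsel : ∀ f, ∃ a' ∈ A, (∃ a ∈ A, d a f < t) → d a' f < t := by
    intro f
    by_cases hf : ∃ a ∈ A, d a f < t
    · obtain ⟨a, ha, haf⟩ := hf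
      exact ⟨a, ha, fun _ => haf⟩
    · exact ⟨a₀, ha₀, fun h => absurd h hf⟩
  choose g hgA hg using hsel
  refine ⟨g '' F, image_subset_iff.2 fun f _ => hgA f, hF.image g, fun a ha => ?_⟩
  obtain ⟨f, hf, haf⟩ := h a ha
  refine ⟨g f, mem_image_of_mem g hf, ?_⟩
  calc d a (g f) ≤ d a f + d (g f) f := hsymm (g f) f ▸ htri a f (g f)
    _ < t + t := add_lt_add haf (hg f ⟨a, ha, haf⟩)
    _ = 2 * t := (two_mul t).symm

lemma chi0D_le_two_mul_of_forall_finite (hd : ∀ a b, 0 ≤ d a b) (hsymm : ∀ a b, d a b = d b a)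
    (htri : ∀ a b c, d a c ≤ d a b + d b c) (hA : A.Nonempty) (hs : 0 ≤ s)
    (h : ∀ ε > 0, ∃ F : Set Z, F.Finite ∧ ∀ a ∈ A, ∃ f ∈ F, d a f < s + ε) :
    chi0D d A ≤ 2 * s := by
  refine le_of_forall_pos_lt_add fun ε hε => ?_
  obtain ⟨F, hF, hAF⟩ := h (ε / 4) (by positivity)
  obtain ⟨G, hGA, hG, hAG⟩ := exists_finite_subset_of_finite hsymm htri hA hF hAF
  have hGne : G.Nonempty := by
    obtain ⟨a, ha⟩ := hA
    obtain ⟨g, hg, -⟩ := hAG a ha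
    exact ⟨g, hg⟩
  calc chi0D d A ≤ hdD d A G := chi0D_le_hdD hd hGA hG hGne
    _ ≤ 2 * (s + ε / 4) := hdD_le_of_forall_exists hd (by positivity)
        fun a ha => (hAG a ha).imp fun _ hg => ⟨hg.1, hg.2.le⟩
    _ < 2 * s + ε := by linarith

end HausdorffExcess

lemma IsWeaklyCompact.isBounded {𝕜 : Type*} [RCLike 𝕜] {Z : Type*} [NormedAddCommGroup Z]
    [NormedSpace 𝕜 Z] {K : Set Z} (hK : IsWeaklyCompact 𝕜 K) : Bornology.IsBounded K := by
  have hc : IsCompact (inclusionInDoubleDualWeak 𝕜 Z '' (toWeakSpace 𝕜 Z '' K)) :=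
    hK.image (inclusionInDoubleDualWeak 𝕜 Z).continuous
  obtain ⟨C, hC⟩ := isBounded_iff_forall_norm_le.1
    (WeakDual.isBounded_iff_isVonNBounded.2 (hc.isVonNBounded 𝕜))
  refine isBounded_iff_forall_norm_le.2 ⟨C, fun k hk => ?_⟩
  rw [← (inclusionInDoubleDualLi 𝕜 (E := Z)).norm_map k]
  exact hC _ ⟨toWeakSpace 𝕜 Z k, ⟨k, hk, rfl⟩, rfl⟩

section SupDistOn

variable {𝕜 : Type*} [RCLike 𝕜] {X : Type*} [NormedAddCommGroup X] [NormedSpace 𝕜 X]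
  {L : Set X}

def supDistOn (L : Set X) (φ ψ : StrongDual 𝕜 X) : ℝ :=
  ⨆ y : L, ‖φ y - ψ y‖

lemma supDistOn_nonneg (φ ψ : StrongDual 𝕜 X) : 0 ≤ supDistOn L φ ψ :=
  Real.iSup_nonneg fun _ => norm_nonneg _

lemma supDistOn_comm (φ ψ : StrongDual 𝕜 X) : supDistOn L φ ψ = supDistOn L ψ φ := by
  simp only [supDistOn, norm_sub_rev]

lemma norm_apply_sub_apply_le (hL : L ⊆ closedBall (0 : X) 1) (φ ψ : StrongDual 𝕜 X) (y : L) :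
    ‖φ y - ψ y‖ ≤ ‖φ - ψ‖ := by
  simpa using (φ - ψ).le_opNorm_of_le (mem_closedBall_zero_iff.1 (hL y.2))

lemma supDistOn_le_norm_sub (hL : L ⊆ closedBall (0 : X) 1) (φ ψ : StrongDual 𝕜 X) :
    supDistOn L φ ψ ≤ ‖φ - ψ‖ :=
  Real.iSup_le (norm_apply_sub_apply_le hL φ ψ) (norm_nonneg _)

lemma supDistOn_triangle (hL : L ⊆ closedBall (0 : X) 1) (φ ψ χ : StrongDual 𝕜 X) :
    supDistOn L φ χ ≤ supDistOn L φ ψ + supDistOn L ψ χ := by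
  have hbdd : ∀ φ ψ : StrongDual 𝕜 X, BddAbove (range fun y : L => ‖φ y - ψ y‖) :=
    fun φ ψ => ⟨‖φ - ψ‖, by rintro _ ⟨y, rfl⟩; exact norm_apply_sub_apply_le hL φ ψ y⟩
  refine Real.iSup_le (fun y => ?_) (add_nonneg (supDistOn_nonneg _ _) (supDistOn_nonneg _ _))
  exact (norm_sub_le_norm_sub_add_norm_sub _ _ _).trans
    (add_le_add (le_ciSup (hbdd φ ψ) y) (le_ciSup (hbdd ψ χ) y))

lemma chi0D_image_restrict (L : Set X) (A : Set (StrongDual 𝕜 X)) :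
    chi0D (fun u v : ↥L → 𝕜 => ⨆ y : L, ‖u y - v y‖)
      ((fun φ : StrongDual 𝕜 X => fun y : L => φ (y : X)) '' A) = chi0D (supDistOn L) A :=
  chi0D_image _ _ A

lemma chi0D_supDistOn_le_chiMackey {K : Set (StrongDual 𝕜 X)} (hK : K.Nonempty)
    (hKb : Bornology.IsBounded K) (hL : L ⊆ closedBall (0 : X) 1) (hLw : IsWeaklyCompact 𝕜 L) :
    chi0D (supDistOn L) K ≤ chiMackey 𝕜 K := by
  obtain ⟨R, hR⟩ := isBounded_iff_forall_norm_le.1 hKb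
  refine le_csSup ⟨R + R, ?_⟩ ⟨L, hL, hLw, (chi0D_image_restrict L K).symm⟩
  rintro _ ⟨L', hL', -, rfl⟩
  rw [chi0D_image_restrict]
  exact chi0D_le_of_forall_le supDistOn_nonneg hK fun a ha b hb =>
    (supDistOn_le_norm_sub hL' a b).trans ((norm_sub_le a b).trans (add_le_add (hR a ha) (hR b hb)))

lemma chiMackey_le_of_forall {A : Set (StrongDual 𝕜 X)} {C : ℝ} (hC : 0 ≤ C)
    (h : ∀ L ⊆ closedBall (0 : X) 1, IsWeaklyCompact 𝕜 L → chi0D (supDistOn L) A ≤ C) :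
    chiMackey 𝕜 A ≤ C := by
  refine Real.sSup_le ?_ hC
  rintro _ ⟨L, hL, hLw, rfl⟩
  rw [chi0D_image_restrict]
  exact h L hL hLw

lemma chi0D_supDistOn_le_two_mul_hdD (hL : L ⊆ closedBall (0 : X) 1)
    {A K : Set (StrongDual 𝕜 X)} (hA : A.Nonempty) (hAb : Bornology.IsBounded A)
    (hK : K.Nonempty) (hKb : Bornology.IsBounded K) (hKL : chi0D (supDistOn L) K ≤ 0) :
    chi0D (supDistOn L) A ≤ 2 * hdD dist A K := by
  obtain ⟨R, hR⟩ := isBounded_iff_forall_norm_le.1 (hAb.union hKb)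
  have hnorm : ∀ a ∈ A ∪ K, ∀ b ∈ A ∪ K, ‖a - b‖ ≤ R + R := fun a ha b hb =>
    (norm_sub_le a b).trans (add_le_add (hR a ha) (hR b hb))
  refine chi0D_le_two_mul_of_forall_finite supDistOn_nonneg supDistOn_comm
    (supDistOn_triangle hL) hA (hdD_nonneg (fun _ _ => dist_nonneg) _ _) fun ε hε => ?_
  obtain ⟨F, -, hF, hKF⟩ := exists_finite_of_chi0D_lt supDistOn_nonneg hK
    (fun a ha b hb => (supDistOn_le_norm_sub hL a b).trans (hnorm a (.inr ha) b (.inr hb)))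
    (hKL.trans_lt (half_pos hε))
  refine ⟨F, hF, fun a ha => ?_⟩
  obtain ⟨k, hk, hak⟩ := exists_lt_of_hdD_lt (fun _ _ => dist_nonneg) hK
    (fun a ha b hb => (dist_eq_norm a b).trans_le (hnorm a (.inl ha) b (.inr hb)))
    (lt_add_of_pos_right _ (half_pos hε)) ha
  obtain ⟨f, hf, hkf⟩ := hKF k hk
  refine ⟨f, hf, ?_⟩
  calc supDistOn L a f ≤ supDistOn L a k + supDistOn L k f := supDistOn_triangle hL a k f
    _ < hdD dist A K + ε / 2 + ε / 2 := by
        refine add_lt_add_of_le_of_lt ?_ hkf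
        exact (supDistOn_le_norm_sub hL a k).trans ((dist_eq_norm a k).symm.trans_le hak.le)
    _ = hdD dist A K + ε := by ring

end SupDistOn

lemma deBlasiOmega_nonneg (𝕜 : Type*) [RCLike 𝕜] {Z : Type*} [NormedAddCommGroup Z]
    [NormedSpace 𝕜 Z] (A : Set Z) : 0 ≤ deBlasiOmega 𝕜 A :=
  Real.sInf_nonneg <| by
    rintro _ ⟨K, -, -, rfl⟩
    exact hdD_nonneg (fun _ _ => dist_nonneg) _ _

lemma le_deBlasiOmega {𝕜 : Type*} [RCLike 𝕜] {Z : Type*} [NormedAddCommGroup Z]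
    [NormedSpace 𝕜 Z] {A : Set Z} {c : ℝ}
    (h : ∀ K : Set Z, K.Nonempty → IsWeaklyCompact 𝕜 K → c ≤ hdD dist A K) :
    c ≤ deBlasiOmega 𝕜 A := by
  have h0 : IsWeaklyCompact 𝕜 ({0} : Set Z) := by
    simp only [IsWeaklyCompact, image_singleton, isCompact_singleton]
  refine le_csInf ⟨_, {0}, singleton_nonempty 0, h0, rfl⟩ ?_
  rintro _ ⟨K, hK, hKw, rfl⟩
  exact h K hK hKw

theorem chiMackey_le_two_omega_of_DunfordPettis_general
    {𝕜 : Type*} [RCLike 𝕜] {X : Type*}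
    [NormedAddCommGroup X] [NormedSpace 𝕜 X]
    (hDP : ∀ B : Set (StrongDual 𝕜 X), (∃ K : Set (StrongDual 𝕜 X), B ⊆ K ∧ IsWeaklyCompact 𝕜 K) →
      chiMackey 𝕜 B = 0) :
    ∀ A : Set (StrongDual 𝕜 X), A.Nonempty → Bornology.IsBounded A →
      chiMackey 𝕜 A ≤ 2 * deBlasiOmega 𝕜 A := by
  intro A hA hAb
  refine chiMackey_le_of_forall (mul_nonneg zero_le_two (deBlasiOmega_nonneg 𝕜 A))
    fun L hL hLw => ?_
  rw [← div_le_iff₀' two_pos]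
  refine le_deBlasiOmega fun K hK hKw => ?_
  rw [div_le_iff₀' two_pos]
  have hKb := hKw.isBounded
  have hKL : chi0D (supDistOn L) K ≤ 0 :=
    hDP K ⟨K, subset_rfl, hKw⟩ ▸ chi0D_supDistOn_le_chiMackey hK hKb hL hLw
  exact chi0D_supDistOn_le_two_mul_hdD hL hA hAb hK hKb hKL

/-- If a Banach space `X` has the Dunford–Pettis property (every relatively
weakly compact subset of `X*` is relatively Mackey compact), then every
nonempty bounded `A ⊆ X*` satisfies `χ_m(A) ≤ 2·ω(A)`. -/
theorem chiMackey_le_two_omega_of_DunfordPettis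
    {𝕜 : Type*} [RCLike 𝕜] {X : Type*}
    [NormedAddCommGroup X] [NormedSpace 𝕜 X] [CompleteSpace X]
    (hDP : ∀ B : Set (StrongDual 𝕜 X), (∃ K : Set (StrongDual 𝕜 X), B ⊆ K ∧ IsWeaklyCompact 𝕜 K) →
      chiMackey 𝕜 B = 0) :
    ∀ A : Set (StrongDual 𝕜 X), A.Nonempty → Bornology.IsBounded A →
      chiMackey 𝕜 A ≤ 2 * deBlasiOmega 𝕜 A :=
  chiMackey_le_two_omega_of_DunfordPettis_general hDP
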